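/- arXiv:2404.19650 — 4 statements merged into one kernel-verified Lean document; each statement's English description precedes it below -/
import Mathlib

section
/- Let (S,∘) be a semigroup, A a subset that is piecewise syndetic, and suppose A = C₁ ∪ C₂. Then C₁ is piecewise syndetic or C₂ is piecewise syndetic. (Partition regularity of piecewise syndeticity for 2-partitions.) -/
/-!
If `⋃_{s ∈ F} s⁻¹A` is thick and `A = C₁ ∪ C₂`, this thick set is `B₁ ∪ B₂` with
`Bᵢ = ⋃_{s ∈ F} s⁻¹Cᵢ`. Whenever `B₁ ∪ B₂` is thick, either `B₁` is piecewise syndetic or `B₂` is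
thick: if the `G`-translates of `B₁` are not thick, a finite `H` witnesses it, and a point `x` with
`G H x ⊆ B₁ ∪ B₂` yields some `h ∈ H` with `G (h x) ⊆ B₂`. Finally, piecewise syndeticity of
`⋃_{s ∈ F} s⁻¹C` passes to `C` by multiplying the two finite sets of translates.
-/

def Thick {S : Type*} [Semigroup S] (A : Set S) : Prop :=
  ∀ F : Finset S, ∃ x : S, ∀ f ∈ F, f * x ∈ A

def PiecewiseSyndetic {S : Type*} [Semigroup S] (A : Set S) : Prop :=
  ∃ F : Finset S, Thick {x : S | ∃ s ∈ F, s * x ∈ A}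

section

variable {S : Type*} [Semigroup S]

theorem Thick.mono {A B : Set S} (hA : Thick A) (hAB : A ⊆ B) : Thick B := fun F =>
  let ⟨x, hx⟩ := hA F
  ⟨x, fun f hf => hAB (hx f hf)⟩

theorem Thick.piecewiseSyndetic {A : Set S} (hA : Thick A) : PiecewiseSyndetic A := by
  classical
  -- a thick set is tested against `∅` too, so `S` is nonempty
  obtain ⟨a, -⟩ := hA ∅
  refine ⟨{a}, fun G => ?_⟩
  obtain ⟨x, hx⟩ := hA (G.image (a * ·))
  refine ⟨x, fun g hg => ⟨a, Finset.mem_singleton_self a, ?_⟩⟩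
  simpa only [mul_assoc] using hx (a * g) (Finset.mem_image_of_mem _ hg)

theorem PiecewiseSyndetic.of_translates {C : Set S} {F : Finset S}
    (h : PiecewiseSyndetic {x : S | ∃ s ∈ F, s * x ∈ C}) : PiecewiseSyndetic C := by
  classical
  obtain ⟨G, hG⟩ := h
  refine ⟨(F ×ˢ G).image fun p => p.1 * p.2, hG.mono ?_⟩
  rintro x ⟨t, htG, s, hsF, hstx⟩
  exact ⟨s * t, Finset.mem_image.2 ⟨(s, t), Finset.mem_product.2 ⟨hsF, htG⟩, rfl⟩,
    (mul_assoc s t x).symm ▸ hstx⟩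

theorem Thick.piecewiseSyndetic_or_thick {B₁ B₂ : Set S} (h : Thick (B₁ ∪ B₂)) :
    PiecewiseSyndetic B₁ ∨ Thick B₂ := by
  classical
  refine or_iff_not_imp_left.2 fun hB₁ G => ?_
  simp only [PiecewiseSyndetic, Thick, not_exists, not_forall] at hB₁
  obtain ⟨H, hH⟩ := hB₁ G
  obtain ⟨x, hx⟩ := h ((G ×ˢ H).image fun p => p.1 * p.2)
  obtain ⟨k, hkH, hk⟩ := hH x
  refine ⟨k * x, fun g hg => ?_⟩
  have hgkx : g * (k * x) ∈ B₁ ∪ B₂ := mul_assoc g k x ▸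
    hx (g * k) (Finset.mem_image.2 ⟨(g, k), Finset.mem_product.2 ⟨hg, hkH⟩, rfl⟩)
  exact hgkx.resolve_left fun hB => hk ⟨g, hg, hB⟩

theorem setOf_exists_mul_mem_union (F : Finset S) (C₁ C₂ : Set S) :
    {x : S | ∃ s ∈ F, s * x ∈ C₁ ∪ C₂} =
      {x : S | ∃ s ∈ F, s * x ∈ C₁} ∪ {x : S | ∃ s ∈ F, s * x ∈ C₂} := by
  ext x
  simp only [Set.mem_union, Set.mem_ofPred_eq, ← exists_or, ← and_or_left]

end

theorem piecewiseSyndetic_partition_regular {S : Type*} [Semigroup S]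
    (A C₁ C₂ : Set S) (hA : PiecewiseSyndetic A) (hP : A = C₁ ∪ C₂) :
    PiecewiseSyndetic C₁ ∨ PiecewiseSyndetic C₂ := by
  obtain ⟨F, hF⟩ := hA
  rw [hP, setOf_exists_mul_mem_union] at hF
  exact hF.piecewiseSyndetic_or_thick.imp PiecewiseSyndetic.of_translates
    fun h => h.piecewiseSyndetic.of_translates
end

section
/- Let R be the free semigroup on two generators x and y (nonempty words in {x,y}), let S be the subsemigroup of all nonempty words in x only, let φ : S → R be the inclusion homomorphism, and let A = yR = {yw : w ∈ R}. Then A is syndetic in R, but for every s ∈ S the set φ(s)⁻¹A = {r ∈ R : φ(s)·r ∈ A} is empty. -/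
def Syndetic {S : Type*} [Semigroup S] (A : Set S) : Prop :=
  ∃ F : Finset S, ∀ x : S, ∃ s ∈ F, s * x ∈ A

theorem syndetic_setOf_exists_eq_mul {S : Type*} [Semigroup S] (a : S) :
    Syndetic {w : S | ∃ r, w = a * r} :=
  ⟨{a}, fun w => ⟨a, Finset.mem_singleton_self a, w, rfl⟩⟩

namespace FreeSemigroup

variable {α : Type*}

theorem head_eq_of_mem_closure_singleton_of {a : α} {s : FreeSemigroup α}
    (hs : s ∈ Subsemigroup.closure {of a}) : s.head = a := by
  induction hs using Subsemigroup.closure_induction with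
  | mem t ht => rw [Set.mem_singleton_iff.mp ht]; rfl
  | mul t u _ _ iht _ => rw [head_mul]; exact iht

theorem mul_ne_of_mul_of_head_ne {a : α} {s : FreeSemigroup α} (h : s.head ≠ a)
    (r w : FreeSemigroup α) : s * r ≠ of a * w :=
  fun hsr => h (congrArg head hsr)

end FreeSemigroup

theorem free_semigroup_counterexample :
    let R := FreeSemigroup Bool
    let y : R := FreeSemigroup.of true
    let x : R := FreeSemigroup.of false
    let A : Set R := {w | ∃ r : R, w = y * r}
    Syndetic A ∧
      ∀ s ∈ Subsemigroup.closure ({x} : Set R), {r : R | s * r ∈ A} = ∅ := by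
  intro R y x A
  refine ⟨syndetic_setOf_exists_eq_mul y, fun s hs => ?_⟩
  have hs_head : s.head ≠ true := by
    rw [FreeSemigroup.head_eq_of_mem_closure_singleton_of hs]
    exact Bool.false_ne_true
  exact Set.eq_empty_of_forall_notMem fun r ⟨w, hw⟩ =>
    FreeSemigroup.mul_ne_of_mul_of_head_ne hs_head r w hw
end

section
/- Let (S, +, ·) be a semiring (a set with a commutative associative addition, an associative multiplication, and two-sided distributivity; additive and multiplicative units are not required). Let n ≥ 1 and k ≥ 1 be natural numbers, and let A ⊆ S be both thick and syndetic with respect to the multiplicative structure (S,·). Then there exist x₁, …, xₙ ∈ S such that each xᵢ ∈ A, the product x₁x₂⋯xₙ ∈ A, and every linear combination a₁x₁ + a₂x₂ + ⋯ + aₙxₙ with natural number coefficients 0 ≤ aᵢ ≤ k, not all zero, lies in A. -/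
def MulThick {S : Type*} [Semigroup S] (A : Set S) : Prop :=
  ∀ F : Finset S, ∃ x : S, ∀ f ∈ F, f * x ∈ A

def MulSyndetic {S : Type*} [Semigroup S] (A : Set S) : Prop :=
  ∃ F : Finset S, ∀ x : S, ∃ s ∈ F, s * x ∈ A

/-!
Take `t` so that `G t ⊆ A` for a finite set `G` (thickness), where `G` holds the entries and all
bounded combinations of the finitely many vectors `y_s = (s, c, …, c)`, `s ∈ F`, with `F` a
syndeticity witness. Then every `x = y_s t` has its entries and combinations in `A`, by right
distributivity. Finally choose `s ∈ F` with `s · t (c t)ⁿ⁻¹ ∈ A`: this is the product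
`(s t)(c t)⋯(c t)` of the entries of `y_s t`.
-/

section

variable {S : Type*} {n : ℕ}

theorem MulThick.exists_forall_mul_mem [Semigroup S] {A : Set S} (hA : MulThick A) {G : Set S}
    (hG : G.Finite) : ∃ t, ∀ g ∈ G, g * t ∈ A := by
  obtain ⟨t, ht⟩ := hA hG.toFinset
  exact ⟨t, fun g hg => ht g (hG.mem_toFinset.2 hg)⟩

/-- The list of summands of `∑ i, a i • x i`. -/
def combinationList (x : Fin n → S) (a : Fin n → ℕ) : List S :=
  (List.finRange n).flatMap fun i => List.replicate (a i) (x i)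

theorem combinationList_mul_right [Semigroup S] (y : Fin n → S) (a : Fin n → ℕ) (t : S) :
    combinationList (fun i => y i * t) a = (combinationList y a).map (· * t) := by
  simp [combinationList, List.map_flatMap]

section Combinations

variable [AddCommSemigroup S]

/-- The nonzero combinations `∑ i, a i • y i` with coefficients `a i ≤ k`; sums are taken of
nonempty lists since `S` need not have a zero. -/
def combinationSums (k : ℕ) (y : Fin n → S) : Set S :=
  {z | ∃ a : Fin n → ℕ, (∀ i, a i ≤ k) ∧
    ∃ h tl, combinationList y a = h :: tl ∧ tl.foldl (· + ·) h = z}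

def CombinationsMem (A : Set S) (k : ℕ) (x : Fin n → S) : Prop :=
  ∀ a : Fin n → ℕ, (∀ i, a i ≤ k) →
    ∀ h tl, combinationList x a = h :: tl → tl.foldl (· + ·) h ∈ A

theorem finite_combinationSums (k : ℕ) (y : Fin n → S) : (combinationSums k y).Finite := by
  have hbox : (Set.univ.pi fun _ : Fin n => Set.Iic k).Finite :=
    Set.Finite.pi fun _ => Set.finite_Iic k
  refine (hbox.biUnion fun a _ => Set.Subsingleton.finite
    (s := {z | ∃ h tl, combinationList y a = h :: tl ∧ tl.foldl (· + ·) h = z}) ?_).subset ?_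
  · rintro _ ⟨h, tl, hl, rfl⟩ _ ⟨h', tl', hl', rfl⟩
    obtain ⟨rfl, rfl⟩ := List.cons.inj (hl.symm.trans hl')
    rfl
  · rintro z ⟨a, ha, hz⟩
    exact Set.mem_biUnion (fun i _ => ha i) hz

theorem foldl_add_map_mul_right [Semigroup S] (rd : ∀ a b c : S, (a + b) * c = a * c + b * c)
    (l : List S) (u t : S) :
    (l.map (· * t)).foldl (· + ·) (u * t) = l.foldl (· + ·) u * t := by
  rw [List.foldl_map]
  exact List.foldl_hom (· * t) fun x y => (rd x y t).symm

theorem combinationsMem_mul_right [Semigroup S] (rd : ∀ a b c : S, (a + b) * c = a * c + b * c)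
    {A : Set S} {k : ℕ} {y : Fin n → S} {t : S}
    (hy : ∀ z ∈ combinationSums k y, z * t ∈ A) : CombinationsMem A k fun i => y i * t := by
  intro a ha h tl hl
  rw [combinationList_mul_right, List.map_eq_cons_iff] at hl
  obtain ⟨h', tl', hl', rfl, rfl⟩ := hl
  rw [foldl_add_map_mul_right rd]
  exact hy _ ⟨a, ha, h', tl', hl', rfl⟩

theorem MulThick.exists_forall_combinationsMem [Semigroup S]
    (rd : ∀ a b c : S, (a + b) * c = a * c + b * c) {A : Set S} (hA : MulThick A) (k : ℕ)
    {Y : Set (Fin n → S)} (hY : Y.Finite) :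
    ∃ t, ∀ y ∈ Y, (∀ i, y i * t ∈ A) ∧ CombinationsMem A k fun i => y i * t := by
  obtain ⟨t, ht⟩ := hA.exists_forall_mul_mem
    (hY.biUnion fun y _ => (Set.finite_range y).union (finite_combinationSums k y))
  exact ⟨t, fun y hy => ⟨fun i => ht _ (Set.mem_biUnion hy (Or.inl ⟨i, rfl⟩)),
    combinationsMem_mul_right rd fun z hz => ht _ (Set.mem_biUnion hy (Or.inr hz))⟩⟩

end Combinations

theorem ofFn_cons_const_mul_right [Semigroup S] (m : ℕ) (s c t : S) :
    List.ofFn (fun i => (Fin.cons s fun _ => c : Fin (m + 1) → S) i * t)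
      = s * t :: List.replicate m (c * t) := by
  simp [List.ofFn_succ]

end

theorem thick_and_syndetic_pattern_general {S : Type*} [AddCommSemigroup S] [Semigroup S]
    (rd : ∀ a b c : S, (a + b) * c = a * c + b * c)
    (n k : ℕ) (hn : 1 ≤ n)
    (A : Set S) (hT : MulThick A) (hS : MulSyndetic A) :
    ∃ x : Fin n → S,
      (∀ i, x i ∈ A) ∧
      (∀ h t, List.ofFn x = h :: t → t.foldl (· * ·) h ∈ A) ∧
      (∀ a : Fin n → ℕ, (∀ i, a i ≤ k) →
        ∀ h t, ((List.finRange n).flatMap fun i => List.replicate (a i) (x i)) = h :: t →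
          t.foldl (· + ·) h ∈ A) := by
  obtain ⟨m, rfl⟩ : ∃ m, n = m + 1 := ⟨n - 1, by omega⟩
  obtain ⟨F, hF⟩ := hS
  -- thickness for `∅` only provides some element `c : S`
  obtain ⟨c, -⟩ := hT ∅
  let y : S → Fin (m + 1) → S := fun s => Fin.cons s fun _ => c
  obtain ⟨t, ht⟩ := hT.exists_forall_combinationsMem rd k (F.finite_toSet.image y)
  obtain ⟨s, hsF, hs⟩ := hF ((List.replicate m (c * t)).foldl (· * ·) t)
  obtain ⟨hmem, hcomb⟩ := ht (y s) ⟨s, hsF, rfl⟩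
  refine ⟨fun i => y s i * t, hmem, fun h tl hl => ?_, hcomb⟩
  rw [ofFn_cons_const_mul_right] at hl
  obtain ⟨rfl, rfl⟩ := List.cons.inj hl
  rwa [List.foldl_assoc]

theorem thick_and_syndetic_pattern {S : Type*} [AddCommSemigroup S] [Semigroup S]
    (ld : ∀ a b c : S, a * (b + c) = a * b + a * c)
    (rd : ∀ a b c : S, (a + b) * c = a * c + b * c)
    (n k : ℕ) (hn : 1 ≤ n) (hk : 1 ≤ k)
    (A : Set S) (hT : MulThick A) (hS : MulSyndetic A) :
    ∃ x : Fin n → S,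
      (∀ i, x i ∈ A) ∧
      (∀ h t, List.ofFn x = h :: t → t.foldl (· * ·) h ∈ A) ∧
      (∀ a : Fin n → ℕ, (∀ i, a i ≤ k) →
        ∀ h t, ((List.finRange n).flatMap fun i => List.replicate (a i) (x i)) = h :: t →
          t.foldl (· + ·) h ∈ A) :=
  thick_and_syndetic_pattern_general rd n k hn A hT hS
end

section
/- Let (S, +, ·) be a semiring and A ⊆ S both multiplicatively thick and multiplicatively syndetic. Then there exist x, y ∈ S with {x, y, x·y, x+y} ⊆ A. -/
/-! Let `F` witness syndeticity and fix any `v`. Thickness gives `c` with `f * c ∈ A` for all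
`f ∈ F ∪ (F + v) ∪ {v}`; syndeticity at `c * (v * c)` gives `u ∈ F` with `u * c * (v * c) ∈ A`.
Then `x = u * c` and `y = v * c` work, since `x + y = (u + v) * c`. -/

theorem thick_and_syndetic_xy_pattern_general {S : Type*} [AddCommSemigroup S] [Semigroup S]
    (rd : ∀ a b c : S, (a + b) * c = a * c + b * c)
    (A : Set S) (hT : MulThick A) (hS : MulSyndetic A) :
    ∃ x y : S, x ∈ A ∧ y ∈ A ∧ x * y ∈ A ∧ x + y ∈ A := by
  classical
  obtain ⟨F, hF⟩ := hS
  obtain ⟨v, -⟩ := hT ∅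
  obtain ⟨c, hc⟩ := hT (insert v (F ∪ F.image (· + v)))
  obtain ⟨u, hu, huvc⟩ := hF (c * (v * c))
  refine ⟨u * c, v * c, hc u (by simp [hu]), hc v (by simp), by rwa [mul_assoc], ?_⟩
  rw [← rd]
  exact hc (u + v) <|
    Finset.mem_insert_of_mem <| Finset.mem_union_right _ <| Finset.mem_image_of_mem _ hu

theorem thick_and_syndetic_xy_pattern {S : Type*} [AddCommSemigroup S] [Semigroup S]
    (ld : ∀ a b c : S, a * (b + c) = a * b + a * c)
    (rd : ∀ a b c : S, (a + b) * c = a * c + b * c)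
    (A : Set S) (hT : MulThick A) (hS : MulSyndetic A) :
    ∃ x y : S, x ∈ A ∧ y ∈ A ∧ x * y ∈ A ∧ x + y ∈ A :=
  thick_and_syndetic_xy_pattern_general rd A hT hS
end
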